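/- Let D be a second-order vector field on ℝ^N × ℝ^N. For any vector field X, the field X^(D) := X + S([D, X]) satisfies S([X^(D), D]) = 0, i.e. X^(D) is Newtonoid with respect to D. -/

import Mathlib

/-- The tangent bundle of `ℝ^N`, with coordinates `(x, v)`. -/
abbrev TB (N : ℕ) := ((Fin N → ℝ) × (Fin N → ℝ))

/-- Lie bracket of vector fields: `[Y,Z](p) = DZ(p)(Y p) − DY(p)(Z p)`. -/
noncomputable def lieBracket {E : Type*} [NormedAddCommGroup E] [NormedSpace ℝ E]
    (Y Z : E → E) (p : E) : E :=
  fderiv ℝ Z p (Y p) - fderiv ℝ Y p (Z p)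

/-- The vertical endomorphism: `S(Y^a ∂_{x^a} + W^a ∂_{v^a}) = Y^a ∂_{v^a}`. -/
def Svert {N : ℕ} (w : TB N) : TB N := (0, w.1)

/-- For a second-order vector field `D` and any smooth vector field
`X`, the field `X^(D) := X + S([D,X])` is Newtonoid with respect to `D`:
`S([X^(D), D]) = 0`. -/
theorem newtonoid_projection_is_newtonoid {N : ℕ}
    (a : TB N → (Fin N → ℝ)) (ha : ContDiff ℝ (⊤ : ℕ∞) a)
    (D : TB N → TB N) (hD : ∀ p, D p = (p.2, a p))
    (X : TB N → TB N) (hX : ContDiff ℝ (⊤ : ℕ∞) X) :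
    ∀ p, Svert (lieBracket (fun q => X q + Svert (lieBracket D X q)) D p) = 0 := by
  have hDfun : D = fun q => (q.2, a q) := funext hD
  subst hDfun
  set D : TB N → TB N := fun q => (q.2, a q) with hDdef
  have hDsmooth : ContDiff ℝ (⊤ : ℕ∞) D := contDiff_snd.prodMk ha
  have hDderiv : ∀ q : TB N, HasFDerivAt D
      ((ContinuousLinearMap.snd ℝ (Fin N → ℝ) (Fin N → ℝ)).prod (fderiv ℝ a q)) q :=
    fun q => HasFDerivAt.prodMk hasFDerivAt_snd ((ha.differentiable (by simp) q).hasFDerivAt)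
  have hXd : ∀ q : TB N, HasFDerivAt X (fderiv ℝ X q) q :=
    fun q => (hX.differentiable (by simp) q).hasFDerivAt
  have hfeq : (fun q => X q + Svert (lieBracket D X q))
      = fun q => ((X q).1, (fderiv ℝ X q (D q)).1) := by
    funext q
    have h1 : fderiv ℝ D q
        = (ContinuousLinearMap.snd ℝ (Fin N → ℝ) (Fin N → ℝ)).prod (fderiv ℝ a q) :=
      (hDderiv q).fderiv
    refine Prod.ext ?_ ?_
    · simp [lieBracket, Svert]
    · simp [lieBracket, Svert, h1]
  rw [hfeq]
  intro p
  have hF : ContDiff ℝ (⊤ : ℕ∞) (fderiv ℝ X) := hX.fderiv_right (by simp)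
  have hg : ContDiff ℝ (⊤ : ℕ∞) (fun q => (fderiv ℝ X q) (D q)) := hF.clm_apply hDsmooth
  have hg1 : ContDiff ℝ (⊤ : ℕ∞) (fun q => ((fderiv ℝ X q) (D q)).1) := contDiff_fst.comp hg
  have hf2 : HasFDerivAt (fun q => ((fderiv ℝ X q) (D q)).1)
      (fderiv ℝ (fun q => ((fderiv ℝ X q) (D q)).1) p) p :=
    (hg1.differentiable (by simp) p).hasFDerivAt
  have hf1 : HasFDerivAt (fun q => (X q).1)
      ((ContinuousLinearMap.fst ℝ (Fin N → ℝ) (Fin N → ℝ)).comp (fderiv ℝ X p)) p :=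
    (hXd p).fst
  have hf : HasFDerivAt (fun q => ((X q).1, (fderiv ℝ X q (D q)).1))
      (((ContinuousLinearMap.fst ℝ (Fin N → ℝ) (Fin N → ℝ)).comp (fderiv ℝ X p)).prod
        (fderiv ℝ (fun q => ((fderiv ℝ X q) (D q)).1) p)) p := hf1.prodMk hf2
  have hfd := hf.fderiv
  have hDd : fderiv ℝ D p
      = (ContinuousLinearMap.snd ℝ (Fin N → ℝ) (Fin N → ℝ)).prod (fderiv ℝ a p) :=
    (hDderiv p).fderiv
  refine Prod.ext ?_ ?_
  · simp [Svert]
  · simp [Svert, lieBracket, hfd, hDd]
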